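/- Graphs with maximum density achieved have at most linearly many minimal densest subgraphs: a connected graph G on n vertices has at most n-1 distinct minimal densest subgraphs. -/

import Mathlib

open scoped BigOperators

variable {V : Type*}

/-- Density of a subgraph: m(H)/(n(H)-1). -/
noncomputable def density (G : SimpleGraph V) (H : G.Subgraph) : ℝ :=
  (H.edgeSet.ncard : ℝ) / ((H.verts.ncard : ℝ) - 1)

/-- Fractional arboricity: maximum density over connected subgraphs. -/
noncomputable def fracArboricity (G : SimpleGraph V) : ℝ :=
  sSup {d : ℝ | ∃ H : G.Subgraph, H.Connected ∧ d = density G H}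

/-- A densest subgraph: connected, attaining the maximum density. -/
def IsDensest (G : SimpleGraph V) (H : G.Subgraph) : Prop :=
  H.Connected ∧ density G H = fracArboricity G

/-- A minimal densest subgraph: no proper subgraph is densest. -/
def IsMinimalDensest (G : SimpleGraph V) (H : G.Subgraph) : Prop :=
  IsDensest G H ∧ ∀ K : G.Subgraph, K < H → ¬ IsDensest G K

/-!
Let `d` be the maximum density. Every connected subgraph `K` has `m(K) ≤ d (n(K) - 1)`, and
splitting off a component shows that a disconnected `K` even has `m(K) ≤ d (n(K) - 2)`. If two
densest subgraphs `H₁`, `H₂` share an edge, their union is connected, so inclusion–exclusion gives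
`m(H₁ ⊓ H₂) ≥ d (n(H₁ ⊓ H₂) - 1)`: the intersection is connected and densest, and minimality
forces `H₁ = H₂`. Hence distinct minimal densest subgraphs are edge-disjoint; each has at least
`d` edges, while `G` has at most `d (n - 1)`.
-/

open SimpleGraph

section

variable {G : SimpleGraph V}

namespace SimpleGraph.Subgraph

lemma two_le_ncard_verts_of_mem_edgeSet [Finite V] {H : G.Subgraph} {e : Sym2 V}
    (he : e ∈ H.edgeSet) : 2 ≤ H.verts.ncard := by
  induction e using Sym2.ind with
  | _ a b =>
    have hab : H.Adj a b := he
    calc 2 = ({a, b} : Set V).ncard := (Set.ncard_pair hab.ne).symm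
      _ ≤ H.verts.ncard := Set.ncard_le_ncard (Set.pair_subset hab.fst_mem hab.snd_mem)

lemma ncard_edgeSet_eq_zero_of_ncard_verts_le_one [Finite V] {H : G.Subgraph}
    (h : H.verts.ncard ≤ 1) : H.edgeSet.ncard = 0 :=
  (Set.ncard_eq_zero).mpr <| Set.eq_empty_of_forall_notMem fun _ he ↦
    (two_le_ncard_verts_of_mem_edgeSet he).not_gt (by omega)

lemma ncard_verts_sup_add_ncard_verts_inf [Finite V] (H₁ H₂ : G.Subgraph) :
    (H₁ ⊔ H₂).verts.ncard + (H₁ ⊓ H₂).verts.ncard = H₁.verts.ncard + H₂.verts.ncard :=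
  Set.ncard_union_add_ncard_inter _ _

lemma ncard_edgeSet_sup_add_ncard_edgeSet_inf [Finite V] (H₁ H₂ : G.Subgraph) :
    (H₁ ⊔ H₂).edgeSet.ncard + (H₁ ⊓ H₂).edgeSet.ncard = H₁.edgeSet.ncard + H₂.edgeSet.ncard := by
  rw [edgeSet_sup, edgeSet_inf]
  exact Set.ncard_union_add_ncard_inter _ _

lemma exists_adj_closed_of_not_connected {K : G.Subgraph} (hne : K.verts.Nonempty)
    (hK : ¬ K.Connected) : ∃ S ⊆ K.verts, S.Nonempty ∧ (K.verts \ S).Nonempty ∧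
      ∀ a b, K.Adj a b → a ∈ S → b ∈ S := by
  obtain ⟨x, y, hxy⟩ : ∃ x y : K.verts, ¬ K.coe.Reachable x y := by
    simpa [Subgraph.connected_iff, hne, Subgraph.preconnected_iff, SimpleGraph.Preconnected]
      using hK
  refine ⟨{w | ∃ hw : w ∈ K.verts, K.coe.Reachable x ⟨w, hw⟩}, fun w hw ↦ hw.1,
    ⟨x, x.2, .rfl⟩, ⟨y, y.2, fun ⟨_, hr⟩ ↦ hxy hr⟩, ?_⟩
  rintro a b hab ⟨ha, hr⟩
  exact ⟨hab.snd_mem, hr.trans (Adj.reachable (G := K.coe) hab)⟩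

lemma ncard_edgeSet_induce_add_ncard_edgeSet_induce_diff [Finite V] {K : G.Subgraph}
    {S : Set V} (hS : ∀ a b, K.Adj a b → a ∈ S → b ∈ S) :
    (K.induce S).edgeSet.ncard + (K.induce (K.verts \ S)).edgeSet.ncard = K.edgeSet.ncard := by
  have hunion : (K.induce S).edgeSet ∪ (K.induce (K.verts \ S)).edgeSet = K.edgeSet := by
    ext e
    induction e using Sym2.ind with
    | _ a b =>
      simp only [Set.mem_union, Subgraph.mem_edgeSet, Subgraph.induce_adj, Set.mem_sdiff]
      refine ⟨by rintro (⟨-, -, hab⟩ | ⟨-, -, hab⟩) <;> exact hab, fun hab ↦ ?_⟩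
      by_cases ha : a ∈ S
      · exact .inl ⟨ha, hS a b hab ha, hab⟩
      · exact .inr ⟨⟨hab.fst_mem, ha⟩, ⟨hab.snd_mem, fun hb ↦ ha (hS b a hab.symm hb)⟩, hab⟩
  have hdisj : Disjoint (K.induce S).edgeSet (K.induce (K.verts \ S)).edgeSet := by
    refine Set.disjoint_left.mpr fun e he₁ he₂ ↦ ?_
    induction e using Sym2.ind with
    | _ a b => exact (he₂ : (K.induce _).Adj a b).1.2 (he₁ : (K.induce S).Adj a b).1
  rw [← hunion, Set.ncard_union_eq hdisj]

lemma exists_split_of_not_connected [Finite V] {K : G.Subgraph} (hne : K.verts.Nonempty)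
    (hK : ¬ K.Connected) : ∃ K₁ K₂ : G.Subgraph, K₁.verts.Nonempty ∧ K₂.verts.Nonempty ∧
      K₁.verts.ncard + K₂.verts.ncard = K.verts.ncard ∧
      K₁.edgeSet.ncard + K₂.edgeSet.ncard = K.edgeSet.ncard := by
  obtain ⟨S, hSK, hS, hS', hclosed⟩ := exists_adj_closed_of_not_connected hne hK
  exact ⟨K.induce S, K.induce (K.verts \ S), hS, hS',
    by rw [add_comm]; exact Set.ncard_sdiff_add_ncard_of_subset hSK,
    ncard_edgeSet_induce_add_ncard_edgeSet_induce_diff hclosed⟩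

end SimpleGraph.Subgraph

lemma density_le_ncard_edgeSet (H : G.Subgraph) : density G H ≤ H.edgeSet.ncard := by
  rcases lt_or_ge H.verts.ncard 2 with h | h
  · have h1 : (H.verts.ncard : ℝ) - 1 ≤ 0 := by
      have : (H.verts.ncard : ℝ) ≤ 1 := mod_cast Nat.lt_succ_iff.mp h
      linarith
    exact (div_nonpos_of_nonneg_of_nonpos (Nat.cast_nonneg _) h1).trans (Nat.cast_nonneg _)
  · have h1 : 1 ≤ (H.verts.ncard : ℝ) - 1 := by
      have : (2 : ℝ) ≤ H.verts.ncard := mod_cast h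
      linarith
    exact div_le_self (Nat.cast_nonneg _) h1

lemma density_le_fracArboricity [Finite V] {H : G.Subgraph} (hH : H.Connected) :
    density G H ≤ fracArboricity G := by
  refine le_csSup ⟨Nat.card (Sym2 V), ?_⟩ ⟨H, hH, rfl⟩
  rintro _ ⟨K, -, rfl⟩
  exact (density_le_ncard_edgeSet K).trans (mod_cast Set.ncard_le_card _)

lemma one_le_fracArboricity [Finite V] (hG : G.edgeSet.Nonempty) : 1 ≤ fracArboricity G := by
  obtain ⟨e, he⟩ := hG
  induction e using Sym2.ind with
  | _ u v =>
    have huv : G.Adj u v := he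
    have hdensity : density G (G.subgraphOfAdj huv) = 1 := by
      have hverts : (G.subgraphOfAdj huv).verts = {u, v} := rfl
      rw [density, edgeSet_subgraphOfAdj, hverts, Set.ncard_singleton, Set.ncard_pair huv.ne]
      norm_num
    exact hdensity ▸ density_le_fracArboricity (Subgraph.subgraphOfAdj_connected huv)

lemma ncard_edgeSet_le_of_connected [Finite V] {H : G.Subgraph} (hH : H.Connected) :
    (H.edgeSet.ncard : ℝ) ≤ fracArboricity G * (H.verts.ncard - 1) := by
  have hn : 0 < H.verts.ncard := (Set.ncard_pos).mpr hH.nonempty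
  obtain hn | hn : H.verts.ncard = 1 ∨ 2 ≤ H.verts.ncard := by omega
  · rw [Subgraph.ncard_edgeSet_eq_zero_of_ncard_verts_le_one hn.le, hn]
    simp
  · have hpos : (0 : ℝ) < H.verts.ncard - 1 := by
      have : (2 : ℝ) ≤ H.verts.ncard := mod_cast hn
      linarith
    rw [← div_le_iff₀ hpos]
    exact density_le_fracArboricity hH

lemma isDensest_iff [Finite V] (hd : 0 < fracArboricity G) {H : G.Subgraph} :
    IsDensest G H ↔ H.Connected ∧ 2 ≤ H.verts.ncard ∧
      fracArboricity G * (H.verts.ncard - 1) ≤ H.edgeSet.ncard := by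
  have hpos {H : G.Subgraph} (h : 2 ≤ H.verts.ncard) : (0 : ℝ) < H.verts.ncard - 1 := by
    have : (2 : ℝ) ≤ H.verts.ncard := mod_cast h
    linarith
  constructor
  · rintro ⟨hH, hdensity⟩
    have h2 : 2 ≤ H.verts.ncard := by
      have : 0 < H.verts.ncard := (Set.ncard_pos).mpr hH.nonempty
      by_contra! h
      -- a single vertex has density `m / 0 = 0`
      have hn : (H.verts.ncard : ℝ) = 1 := mod_cast (by omega : H.verts.ncard = 1)
      rw [density, hn, sub_self, div_zero] at hdensity
      exact hd.ne hdensity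
    refine ⟨hH, h2, ?_⟩
    rw [← hdensity, density, div_mul_cancel₀ _ (hpos h2).ne']
  · rintro ⟨hH, h2, hle⟩
    refine ⟨hH, (density_le_fracArboricity hH).antisymm ?_⟩
    rwa [density, le_div_iff₀ (hpos h2)]

lemma ncard_edgeSet_le_of_nonempty [Finite V] (hd : 0 ≤ fracArboricity G) {K : G.Subgraph}
    (hne : K.verts.Nonempty) : (K.edgeSet.ncard : ℝ) ≤ fracArboricity G * (K.verts.ncard - 1) := by
  induction hn : K.verts.ncard using Nat.strong_induction_on generalizing K with
  | _ n ih =>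
    by_cases hK : K.Connected
    · exact hn ▸ ncard_edgeSet_le_of_connected hK
    obtain ⟨K₁, K₂, hne₁, hne₂, hverts, hedges⟩ := Subgraph.exists_split_of_not_connected hne hK
    have h₁ := ih _ (by have := (Set.ncard_pos).mpr hne₂; omega) hne₁ rfl
    have h₂ := ih _ (by have := (Set.ncard_pos).mpr hne₁; omega) hne₂ rfl
    have hverts' : (K₁.verts.ncard : ℝ) + K₂.verts.ncard = n := mod_cast hverts.trans hn
    have hedges' : (K₁.edgeSet.ncard : ℝ) + K₂.edgeSet.ncard = K.edgeSet.ncard := mod_cast hedges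
    nlinarith

lemma ncard_edgeSet_le_of_not_connected [Finite V] (hd : 0 ≤ fracArboricity G) {K : G.Subgraph}
    (hne : K.verts.Nonempty) (hK : ¬ K.Connected) :
    (K.edgeSet.ncard : ℝ) ≤ fracArboricity G * (K.verts.ncard - 2) := by
  obtain ⟨K₁, K₂, hne₁, hne₂, hverts, hedges⟩ := Subgraph.exists_split_of_not_connected hne hK
  have h₁ := ncard_edgeSet_le_of_nonempty hd hne₁
  have h₂ := ncard_edgeSet_le_of_nonempty hd hne₂
  have hverts' : (K₁.verts.ncard : ℝ) + K₂.verts.ncard = K.verts.ncard := mod_cast hverts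
  have hedges' : (K₁.edgeSet.ncard : ℝ) + K₂.edgeSet.ncard = K.edgeSet.ncard := mod_cast hedges
  nlinarith

lemma IsDensest.inf [Finite V] {H₁ H₂ : G.Subgraph} (h₁ : IsDensest G H₁) (h₂ : IsDensest G H₂)
    {e : Sym2 V} (he₁ : e ∈ H₁.edgeSet) (he₂ : e ∈ H₂.edgeSet) : IsDensest G (H₁ ⊓ H₂) := by
  have hd : 0 < fracArboricity G :=
    zero_lt_one.trans_le (one_le_fracArboricity ⟨e, H₁.edgeSet_subset he₁⟩)
  obtain ⟨hconn₁, -, hle₁⟩ := (isDensest_iff hd).mp h₁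
  obtain ⟨hconn₂, -, hle₂⟩ := (isDensest_iff hd).mp h₂
  have he : e ∈ (H₁ ⊓ H₂).edgeSet := Subgraph.edgeSet_inf ▸ ⟨he₁, he₂⟩
  have h2 := Subgraph.two_le_ncard_verts_of_mem_edgeSet he
  have hne : (H₁ ⊓ H₂).verts.Nonempty := Set.nonempty_of_ncard_ne_zero (by omega)
  have hsup := ncard_edgeSet_le_of_connected <|
    Subgraph.connected_sup hconn₁.preconnected hconn₂.preconnected hne
  have hverts : ((H₁ ⊔ H₂).verts.ncard : ℝ) + (H₁ ⊓ H₂).verts.ncard =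
      H₁.verts.ncard + H₂.verts.ncard := mod_cast H₁.ncard_verts_sup_add_ncard_verts_inf H₂
  have hedges : ((H₁ ⊔ H₂).edgeSet.ncard : ℝ) + (H₁ ⊓ H₂).edgeSet.ncard =
      H₁.edgeSet.ncard + H₂.edgeSet.ncard := mod_cast H₁.ncard_edgeSet_sup_add_ncard_edgeSet_inf H₂
  -- supermodularity: the intersection is at least as dense as the two densest subgraphs
  have hle : fracArboricity G * ((H₁ ⊓ H₂).verts.ncard - 1) ≤ (H₁ ⊓ H₂).edgeSet.ncard := by
    nlinarith
  have hconn : (H₁ ⊓ H₂).Connected := by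
    by_contra hconn
    have := ncard_edgeSet_le_of_not_connected hd.le hne hconn
    nlinarith
  exact (isDensest_iff hd).mpr ⟨hconn, h2, hle⟩

lemma IsMinimalDensest.disjoint_edgeSet [Finite V] {H₁ H₂ : G.Subgraph}
    (h₁ : IsMinimalDensest G H₁) (h₂ : IsMinimalDensest G H₂) (hne : H₁ ≠ H₂) :
    Disjoint H₁.edgeSet H₂.edgeSet := by
  refine Set.disjoint_left.mpr fun e he₁ he₂ ↦ ?_
  have hinf := h₁.1.inf h₂.1 he₁ he₂
  have hle : H₁ ≤ H₂ := inf_eq_left.mp <| by_contra fun h ↦ h₁.2 _ (inf_le_left.lt_of_ne h) hinf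
  exact h₂.2 _ (hle.lt_of_ne hne) h₁.1

lemma ncard_mul_le_ncard_edgeSet [Finite V] {S : Set G.Subgraph}
    (hS : S.PairwiseDisjoint Subgraph.edgeSet) {c : ℝ} (hc : ∀ H ∈ S, c ≤ H.edgeSet.ncard) :
    S.ncard * c ≤ G.edgeSet.ncard := by
  have hS' : S.Finite := S.toFinite
  calc S.ncard * c = ∑ _H ∈ hS'.toFinset, c := by simp [Set.ncard_eq_toFinset_card S hS']
    _ ≤ ∑ H ∈ hS'.toFinset, (H.edgeSet.ncard : ℝ) :=
        Finset.sum_le_sum fun H hH ↦ hc H (hS'.mem_toFinset.mp hH)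
    _ = (⋃ H ∈ S, H.edgeSet).ncard := by
        rw [hS'.ncard_biUnion (fun _ _ ↦ Set.toFinite _) hS,
          finsum_mem_eq_finite_toFinset_sum _ hS', Nat.cast_sum]
    _ ≤ G.edgeSet.ncard :=
        mod_cast Set.ncard_le_ncard (Set.iUnion₂_subset fun H _ ↦ H.edgeSet_subset)

lemma IsDensest.fracArboricity_le_ncard_edgeSet [Finite V] {H : G.Subgraph}
    (h : IsDensest G H) : fracArboricity G ≤ H.edgeSet.ncard := by
  rcases le_or_gt (fracArboricity G) 0 with hd | hd
  · exact hd.trans (Nat.cast_nonneg _)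
  obtain ⟨-, h2, hle⟩ := (isDensest_iff hd).mp h
  have : (2 : ℝ) ≤ H.verts.ncard := mod_cast h2
  nlinarith

lemma SimpleGraph.Connected.ncard_edgeSet_le [Fintype V] (hG : G.Connected) :
    (G.edgeSet.ncard : ℝ) ≤ fracArboricity G * (Fintype.card V - 1) := by
  have htop := ncard_edgeSet_le_of_connected (⟨Subgraph.topIso.connected_iff.mpr hG⟩ :
    (⊤ : G.Subgraph).Connected)
  rwa [Subgraph.edgeSet_top, Subgraph.verts_top, Set.ncard_univ, Nat.card_eq_fintype_card] at htop

end

/-- a connected graph on n ≥ 2 vertices has at most n - 1 minimal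
densest subgraphs. -/
theorem card_minimalDensest_le [Fintype V] (G : SimpleGraph V) (hG : G.Connected)
    (hn : 2 ≤ Fintype.card V) :
    {H : G.Subgraph | IsMinimalDensest G H}.ncard ≤ Fintype.card V - 1 := by
  set S := {H : G.Subgraph | IsMinimalDensest G H}
  obtain ⟨v, w, hvw⟩ : ∃ v w, G.Adj v w := by
    have : Nontrivial V := Fintype.one_lt_card_iff_nontrivial.mp hn
    obtain ⟨v⟩ := hG.nonempty
    exact ⟨v, hG.preconnected.exists_adj_of_nontrivial v⟩
  have hd : 1 ≤ fracArboricity G := one_le_fracArboricity ⟨s(v, w), hvw⟩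
  have hS : S.ncard * fracArboricity G ≤ G.edgeSet.ncard :=
    ncard_mul_le_ncard_edgeSet (fun _ h₁ _ h₂ ↦ IsMinimalDensest.disjoint_edgeSet h₁ h₂)
      fun _ hH ↦ hH.1.fracArboricity_le_ncard_edgeSet
  have hG' := hG.ncard_edgeSet_le
  have : (S.ncard : ℝ) + 1 ≤ Fintype.card V := by nlinarith
  have : S.ncard + 1 ≤ Fintype.card V := by exact_mod_cast this
  omega
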